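/- Let G be a semi-Markovian causal graph with observed variables V, let S ⊆ V, and let S₁, …, S_l be the c-components of S. Then Q[S] is identifiable from G if and only if Q[S_i] is identifiable from G for every i ∈ [1:l]. -/

import Mathlib

open scoped Classical

/-- A semi-Markovian causal graph: a DAG over a finite vertex set partitioned into
observed (`obs`) and unobserved (`unobs`) variables, where every unobserved variable
has no parents and exactly two (distinct, observed) children. -/
structure CausalGraph (ν : Type) [Fintype ν] [DecidableEq ν] where
  obs : Finset ν
  unobs : Finset ν
  disj : Disjoint obs unobs
  E : ν → ν → Prop
  edge_mem : ∀ x y, E x y → x ∈ obs ∪ unobs ∧ y ∈ obs ∪ unobs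
  acyclic : ∀ x, ¬ Relation.TransGen E x x
  unobs_no_parent : ∀ u ∈ unobs, ∀ w, ¬ E w u
  unobs_two_children : ∀ u ∈ unobs,
    ∃ a b, a ≠ b ∧ a ∈ obs ∧ b ∈ obs ∧ (∀ w, E u w ↔ w = a ∨ w = b)

namespace CausalGraph

variable {ν : Type} [Fintype ν] [DecidableEq ν]

def verts (G : CausalGraph ν) : Finset ν := G.obs ∪ G.unobs

/-- A structural equation model over the causal graph `G`: finite nonempty domains
(encoded as finite sets of naturals), a pmf for each unobserved variable, and a
conditional pmf (given an assignment to the parents) for each observed variable. -/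
structure SEM (G : CausalGraph ν) where
  dom : ν → Finset ℕ
  dom_ne : ∀ x, (dom x).Nonempty
  pU : ν → ℕ → ℝ
  pU_nonneg : ∀ u n, 0 ≤ pU u n
  pU_sum : ∀ u ∈ G.unobs, ∑ n ∈ dom u, pU u n = 1
  pO : ν → ℕ → (ν → ℕ) → ℝ
  pO_nonneg : ∀ x n pa, 0 ≤ pO x n pa
  pO_sum : ∀ x ∈ G.obs, ∀ pa : ν → ℕ, ∑ n ∈ dom x, pO x n pa = 1
  pO_par : ∀ x n (pa pa' : ν → ℕ), (∀ p, G.E p x → pa p = pa' p) → pO x n pa = pO x n pa'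

namespace SEM

variable {G : CausalGraph ν}

/-- Full assignments: all variables of `G` get values in their domains
(non-vertices are pinned to `0`). -/
noncomputable def fullAssign (M : SEM G) : Finset (ν → ℕ) :=
  Fintype.piFinset (fun x => if x ∈ G.verts then M.dom x else {0})

/-- Observed assignments `dom(V)`: observed variables get values in their domains
(all other coordinates are pinned to `0`). -/
noncomputable def obsAssign (M : SEM G) : Finset (ν → ℕ) :=
  Fintype.piFinset (fun x => if x ∈ G.obs then M.dom x else {0})

/-- `Q^M[S](v) = Σ_u Π_{X ∈ S} P(x | pa_G(X)) Π_{U} P(u)`. -/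
noncomputable def Q (M : SEM G) (S : Finset ν) (v : ν → ℕ) : ℝ :=
  ∑ w ∈ M.fullAssign.filter (fun w => ∀ x ∈ G.obs, w x = v x),
    (∏ x ∈ S, M.pO x (w x) w) * ∏ u ∈ G.unobs, M.pU u (w u)

/-- The observational distribution `P^M(v) = Q^M[V](v)`. -/
noncomputable def P (M : SEM G) (v : ν → ℕ) : ℝ := M.Q G.obs v

/-- Post-interventional probability `P^M_x(y)`: sum of `Q^M[V∖X]` over all observed
realizations consistent with `x` on `X` and `y` on `Y`. -/
noncomputable def Px (M : SEM G) (X : Finset ν) (x : ν → ℕ) (Y : Finset ν) (y : ν → ℕ) : ℝ :=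
  ∑ v ∈ M.obsAssign.filter (fun v => (∀ i ∈ X, v i = x i) ∧ (∀ i ∈ Y, v i = y i)),
    M.Q (G.obs \ X) v

/-- `M ∈ 𝕄⁺(G)`: strictly positive observational distribution. -/
def positive (M : SEM G) : Prop := ∀ v ∈ M.obsAssign, 0 < M.P v

end SEM

/-- The causal effect of `X` on `Y` is identifiable from `G`. -/
def Identifiable (G : CausalGraph ν) (X Y : Finset ν) : Prop :=
  ∀ M₁ M₂ : SEM G, M₁.positive → M₂.positive →
    (∀ i ∈ G.obs, M₁.dom i = M₂.dom i) →
    (∀ v ∈ M₁.obsAssign, M₁.P v = M₂.P v) →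
    ∀ x y : ν → ℕ, (∀ i ∈ X, x i ∈ M₁.dom i) → (∀ i ∈ Y, y i ∈ M₁.dom i) →
      M₁.Px X x Y y = M₂.Px X x Y y

/-- `Q[S]` is identifiable from `G`. -/
def QIdentifiable (G : CausalGraph ν) (S : Finset ν) : Prop :=
  Identifiable G (G.obs \ S) S

/-- The causal effect of `X` on `Y` is g-identifiable from `(𝔸, G)`. -/
def GIdentifiable (G : CausalGraph ν) (𝔸 : Finset (Finset ν)) (X Y : Finset ν) : Prop :=
  ∀ M₁ M₂ : SEM G, M₁.positive → M₂.positive →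
    (∀ i ∈ G.obs, M₁.dom i = M₂.dom i) →
    (∀ A ∈ 𝔸, ∀ v ∈ M₁.obsAssign, M₁.Q A v = M₂.Q A v) →
    ∀ x y : ν → ℕ, (∀ i ∈ X, x i ∈ M₁.dom i) → (∀ i ∈ Y, y i ∈ M₁.dom i) →
      M₁.Px X x Y y = M₂.Px X x Y y

/-- `Q[S]` is g-identifiable from `(𝔸, G)`. -/
def QGIdentifiable (G : CausalGraph ν) (𝔸 : Finset (Finset ν)) (S : Finset ν) : Prop :=
  GIdentifiable G 𝔸 (G.obs \ S) S

/-- Bidirected edge of `G_X` between `a` and `b`: distinct members of `X` sharing an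
unobserved parent (whose two children then necessarily both lie in `X`). -/
def biEdge (G : CausalGraph ν) (X : Finset ν) (a b : ν) : Prop :=
  a ≠ b ∧ a ∈ X ∧ b ∈ X ∧ ∃ u ∈ G.unobs, G.E u a ∧ G.E u b

/-- `X` is a single c-component of `G`. -/
def SingleC (G : CausalGraph ν) (X : Finset ν) : Prop :=
  X.Nonempty ∧ ∀ a ∈ X, ∀ b ∈ X, Relation.ReflTransGen (G.biEdge X) a b

/-- The c-components of `S`: connected components of the bidirected part of `G_S`. -/
noncomputable def cComponents (G : CausalGraph ν) (S : Finset ν) : Finset (Finset ν) :=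
  S.image (fun a => S.filter (fun b => Relation.ReflTransGen (G.biEdge S) a b))

/-- Directed edge of `G_X` (both endpoints in `X`). -/
def dirEdgeIn (G : CausalGraph ν) (X : Finset ν) (a b : ν) : Prop :=
  a ∈ X ∧ b ∈ X ∧ G.E a b

/-- `Anc_Y(G_X)`: members of `X` having a directed path in `G_X` to some member of `Y`. -/
noncomputable def ancIn (G : CausalGraph ν) (X Y : Finset ν) : Finset ν :=
  X.filter (fun a => ∃ y ∈ Y, Relation.ReflTransGen (G.dirEdgeIn X) a y)

/-- Unobserved vertices of the induced subgraph `G[A]`: unobserved vertices of `G`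
both of whose children lie in `A`. -/
noncomputable def inducedUnobs (G : CausalGraph ν) (A : Finset ν) : Finset ν :=
  G.unobs.filter (fun u => ∀ w, G.E u w → w ∈ A)

/-- The induced subgraph `G[A]`. -/
noncomputable def induced (G : CausalGraph ν) (A : Finset ν) : CausalGraph ν where
  obs := A ∩ G.obs
  unobs := G.inducedUnobs A
  disj := G.disj.mono Finset.inter_subset_right (Finset.filter_subset _ _)
  E x y := G.E x y ∧ x ∈ (A ∩ G.obs) ∪ G.inducedUnobs A ∧ y ∈ (A ∩ G.obs) ∪ G.inducedUnobs A
  edge_mem := fun x y h => ⟨h.2.1, h.2.2⟩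
  acyclic := fun x h => G.acyclic x (by
    suffices key : ∀ a b, Relation.TransGen _ a b → Relation.TransGen G.E a b from key x x h
    intro a b h'
    induction h' with
    | single hab => exact Relation.TransGen.single hab.1
    | tail _ hab ih => exact Relation.TransGen.tail ih hab.1)
  unobs_no_parent := fun u hu w hw =>
    G.unobs_no_parent u (Finset.mem_filter.mp hu).1 w hw.1
  unobs_two_children := by
    intro u hu
    have hu' := Finset.mem_filter.mp hu
    obtain ⟨a, b, hab, ha, hb, hiff⟩ := G.unobs_two_children u hu'.1
    have hEa : G.E u a := (hiff a).mpr (Or.inl rfl)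
    have hEb : G.E u b := (hiff b).mpr (Or.inr rfl)
    have haA : a ∈ A := hu'.2 a hEa
    have hbA : b ∈ A := hu'.2 b hEb
    refine ⟨a, b, hab, Finset.mem_inter.mpr ⟨haA, ha⟩, Finset.mem_inter.mpr ⟨hbA, hb⟩, ?_⟩
    intro w
    constructor
    · intro hw; exact (hiff w).mp hw.1
    · rintro (rfl | rfl)
      · exact ⟨hEa, Finset.mem_union.mpr (Or.inr hu),
          Finset.mem_union.mpr (Or.inl (Finset.mem_inter.mpr ⟨haA, ha⟩))⟩
      · exact ⟨hEb, Finset.mem_union.mpr (Or.inr hu),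
          Finset.mem_union.mpr (Or.inl (Finset.mem_inter.mpr ⟨hbA, hb⟩))⟩

/-- `H` is a subgraph of `G`. -/
def IsSubgraph (H G : CausalGraph ν) : Prop :=
  H.obs ⊆ G.obs ∧ H.unobs ⊆ G.unobs ∧ ∀ a b, H.E a b → G.E a b

/-- `H` is an `R`-rooted c-forest: `R` is the root set of `H`, the observed vertex set of
`H` is a single c-component, and every observed vertex has at most one child in `H`. -/
def IsCForest (H : CausalGraph ν) (R : Finset ν) : Prop :=
  H.obs.filter (fun x => ∀ w, ¬ H.E x w) = R ∧
  H.SingleC H.obs ∧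
  ∀ x ∈ H.obs, ∀ w w', H.E x w → H.E x w' → w = w'

end CausalGraph

/-!
`Q[S]` is the product of the `Q[Sᵢ]` over the c-components of `S`: distinct components share no
unobserved parent, so the sum over the unobserved variables splits. This gives `⇐`.
For `⇒` the `Q[Sᵢ]` are recovered from `Q[S]`. Summing out a sink `m` of `S` gives
`Q[S ∖ {m}]`; so if `S = A ⊔ B` with no unobserved parent common to `A` and `B`, induction on
`|S|` yields `Q[A]`, dividing `Q[S] = Q[A] Q[B]` by `Q[B] ≥ P > 0` whenever the removed sink lies
in `A`. Finally, identifiability of `Q[T]` means that `Q[T]` is determined by `P`, since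
`P_x(y)` with `x` on `V ∖ T` and `y` on `T` is a single value of `Q[T]`.
-/

section PiFinset

open Finset
open Fintype (piFinset mem_piFinset)

variable {ι α R : Type*} [Fintype ι] [DecidableEq ι]

/-- `(w, w') ↦ (A.piecewise w w', A.piecewise w' w)` is an involution of the square of
`piFinset d`. -/
theorem card_piFinset_mul_sum_mul [CommSemiring R] (d : ι → Finset α) (A : Finset ι)
    (f g : (ι → α) → R)
    (hf : ∀ w ∈ piFinset d, ∀ w' ∈ piFinset d, f (A.piecewise w w') = f w)
    (hg : ∀ w ∈ piFinset d, ∀ w' ∈ piFinset d, g (A.piecewise w w') = g w') :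
    #(piFinset d) * ∑ w ∈ piFinset d, f w * g w =
      (∑ w ∈ piFinset d, f w) * ∑ w ∈ piFinset d, g w := by
  set P := piFinset d
  have hmem : ∀ w ∈ P, ∀ w' ∈ P, A.piecewise w w' ∈ P := fun w hw w' hw' =>
    mem_piFinset.2 fun i => by
      by_cases hi : i ∈ A <;> simp [hi, mem_piFinset.1 hw i, mem_piFinset.1 hw' i]
  have hswap : ∀ w w' : ι → α, A.piecewise (A.piecewise w w') (A.piecewise w' w) = w := by
    intro w w'
    funext i
    by_cases hi : i ∈ A <;> simp [hi]
  calc (#P : R) * ∑ w ∈ P, f w * g w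
      = ∑ p ∈ P ×ˢ P, f p.1 * g p.1 := by
        simp only [sum_product, sum_const, nsmul_eq_mul, ← mul_sum]
    _ = ∑ p ∈ P ×ˢ P, f (A.piecewise p.1 p.2) * g (A.piecewise p.1 p.2) := by
        have hσ : ∀ p ∈ P ×ˢ P, (A.piecewise p.1 p.2, A.piecewise p.2 p.1) ∈ P ×ˢ P := by
          intro p hp
          rw [mem_product] at hp ⊢
          exact ⟨hmem _ hp.1 _ hp.2, hmem _ hp.2 _ hp.1⟩
        exact (sum_nbij' _ _ hσ hσ (fun p _ => Prod.ext (hswap _ _) (hswap _ _))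
          (fun p _ => Prod.ext (hswap _ _) (hswap _ _)) fun _ _ => rfl).symm
    _ = ∑ p ∈ P ×ˢ P, f p.1 * g p.2 :=
        sum_congr rfl fun p hp => by
          rw [mem_product] at hp
          rw [hf _ hp.1 _ hp.2, hg _ hp.1 _ hp.2]
    _ = (∑ w ∈ P, f w) * ∑ w ∈ P, g w := by rw [Finset.sum_mul_sum, sum_product]

theorem sum_piFinset_update_singleton [AddCommMonoid R] (d : ι → Finset α) {i : ι} {a : α}
    (hd : d i = {a}) (b : α) (F : (ι → α) → R) :
    ∑ w ∈ piFinset (Function.update d i {b}), F w =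
      ∑ w ∈ piFinset d, F (Function.update w i b) := by
  have key : ∀ (e : ι → Finset α) (c : α) (w : ι → α), w ∈ piFinset e →
      e i = {c} → ∀ c', Function.update (Function.update w i c') i c = w := by
    intro e c w hw he c'
    have : w i = c := by simpa [he] using mem_piFinset.1 hw i
    simp [← this]
  refine sum_nbij' (Function.update · i a) (Function.update · i b) ?_ ?_ ?_ ?_ ?_
  · intro w hw
    refine mem_piFinset.2 fun j => ?_
    rcases eq_or_ne j i with rfl | hj
    · simp [hd]
    · simpa [hj] using mem_piFinset.1 hw j
  · intro w hw
    refine mem_piFinset.2 fun j => ?_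
    rcases eq_or_ne j i with rfl | hj
    · simp
    · simpa [hj] using mem_piFinset.1 hw j
  · exact fun w hw => key _ b w hw (by simp) a
  · exact fun w hw => key d a w hw hd b
  · exact fun w hw => by rw [key _ b w hw (by simp) a]

end PiFinset

namespace CausalGraph

open Finset
open Fintype (piFinset mem_piFinset)

variable {ν : Type} [Fintype ν] [DecidableEq ν] {G : CausalGraph ν}

theorem notMem_unobs_of_mem_obs {i : ν} (hi : i ∈ G.obs) : i ∉ G.unobs :=
  disjoint_left.1 G.disj hi

def Unconfounded (G : CausalGraph ν) (A B : Finset ν) : Prop :=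
  ∀ u ∈ G.unobs, ∀ a ∈ A, ∀ b ∈ B, G.E u a → ¬ G.E u b

theorem Unconfounded.symm {A B : Finset ν} (h : G.Unconfounded A B) : G.Unconfounded B A :=
  fun u hu b hb a ha hub hua => h u hu a ha b hb hua hub

theorem Unconfounded.mono_right {A B C : Finset ν} (h : G.Unconfounded A B) (hCB : C ⊆ B) :
    G.Unconfounded A C :=
  fun u hu a ha c hc => h u hu a ha c (hCB hc)

theorem exists_sink {S : Finset ν} (hS : S.Nonempty) : ∃ m ∈ S, ∀ y ∈ S, ¬ G.E m y := by
  let r : ν → ν → Prop := fun a b => Relation.TransGen G.E b a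
  have : IsTrans ν r := ⟨fun _ _ _ h₁ h₂ => h₂.trans h₁⟩
  have : Std.Irrefl r := ⟨G.acyclic⟩
  obtain ⟨m, hm, hmin⟩ := (Finite.wellFounded_of_trans_of_irrefl r).has_min (S : Set ν) hS
  exact ⟨m, hm, fun y hy hmy => hmin y hy (.single hmy)⟩

theorem biEdge_symm {X : Finset ν} {a b : ν} (h : G.biEdge X a b) : G.biEdge X b a :=
  let ⟨hne, ha, hb, u, hu, hua, hub⟩ := h
  ⟨hne.symm, hb, ha, u, hu, hub, hua⟩

theorem reach_symm {X : Finset ν} {a b : ν} (h : Relation.ReflTransGen (G.biEdge X) a b) :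
    Relation.ReflTransGen (G.biEdge X) b a := by
  induction h with
  | refl => exact .refl
  | tail _ hbc ih => exact .head (biEdge_symm hbc) ih

section cComponents

variable {S T T' : Finset ν}

theorem subset_of_mem_cComponents (hT : T ∈ G.cComponents S) : T ⊆ S := by
  obtain ⟨a, -, rfl⟩ := mem_image.1 hT
  exact filter_subset _ _

theorem biUnion_cComponents (S : Finset ν) : (G.cComponents S).biUnion id = S := by
  ext a
  simp only [mem_biUnion, id]
  exact ⟨fun ⟨_, hT, ha⟩ => subset_of_mem_cComponents hT ha,
    fun ha => ⟨_, mem_image_of_mem _ ha, mem_filter.2 ⟨ha, .refl⟩⟩⟩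

theorem unconfounded_sdiff_of_mem_cComponents (hT : T ∈ G.cComponents S) :
    G.Unconfounded T (S \ T) := by
  obtain ⟨c, -, rfl⟩ := mem_image.1 hT
  intro u hu a ha b hb hua hub
  obtain ⟨hbS, hbT⟩ := mem_sdiff.1 hb
  obtain ⟨haS, hca⟩ := mem_filter.1 ha
  exact hbT (mem_filter.2 ⟨hbS, hca.tail ⟨fun h => hbT (h ▸ ha), haS, hbS, u, hu, hua, hub⟩⟩)

theorem disjoint_of_mem_cComponents (hT : T ∈ G.cComponents S) (hT' : T' ∈ G.cComponents S)
    (hne : T ≠ T') : Disjoint T T' := by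
  obtain ⟨a, -, rfl⟩ := mem_image.1 hT
  obtain ⟨b, -, rfl⟩ := mem_image.1 hT'
  refine disjoint_left.2 fun c hca hcb => hne ?_
  have hab := (mem_filter.1 hca).2.trans (reach_symm (mem_filter.1 hcb).2)
  ext d
  simp only [mem_filter]
  exact and_congr_right fun _ => ⟨(reach_symm hab).trans, hab.trans⟩

theorem unconfounded_of_mem_cComponents (hT : T ∈ G.cComponents S)
    (hT' : T' ∈ G.cComponents S) (hne : T ≠ T') : G.Unconfounded T T' :=
  (unconfounded_sdiff_of_mem_cComponents hT).mono_right <| subset_sdiff.2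
    ⟨subset_of_mem_cComponents hT', (disjoint_of_mem_cComponents hT hT' hne).symm⟩

end cComponents

def joinAssign (G : CausalGraph ν) (T : Finset ν) (x y : ν → ℕ) : ν → ℕ :=
  fun i => if i ∈ G.obs then if i ∈ T then y i else x i else 0

namespace SEM

variable (M : SEM G)

theorem mem_obsAssign_iff {v : ν → ℕ} :
    v ∈ M.obsAssign ↔ (∀ i ∈ G.obs, v i ∈ M.dom i) ∧ ∀ i ∉ G.obs, v i = 0 := by
  simp only [obsAssign, mem_piFinset]
  refine ⟨fun h => ⟨fun i hi => by simpa [hi] using h i, fun i hi => by simpa [hi] using h i⟩,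
    fun h i => ?_⟩
  by_cases hi : i ∈ G.obs <;> simp [hi, h.1, h.2]

theorem obsAssign_congr {M₁ M₂ : SEM G} (hdom : ∀ i ∈ G.obs, M₁.dom i = M₂.dom i) :
    M₁.obsAssign = M₂.obsAssign := by
  unfold obsAssign
  congr 1
  funext i
  split_ifs with hi
  exacts [hdom i hi, rfl]

theorem update_mem_obsAssign {v : ν → ℕ} (hv : v ∈ M.obsAssign) {m : ν} (hm : m ∈ G.obs)
    {n : ℕ} (hn : n ∈ M.dom m) : Function.update v m n ∈ M.obsAssign := by
  rw [mem_obsAssign_iff] at hv ⊢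
  constructor
  · intro i hi
    rcases eq_or_ne i m with rfl | him
    · simpa using hn
    · simpa [him] using hv.1 i hi
  · intro i hi
    simpa [show i ≠ m from fun h => hi (h ▸ hm)] using hv.2 i hi

theorem pO_le_one {x : ν} (hx : x ∈ G.obs) {n : ℕ} (hn : n ∈ M.dom x) (pa : ν → ℕ) :
    M.pO x n pa ≤ 1 :=
  M.pO_sum x hx pa ▸ single_le_sum (fun n _ => M.pO_nonneg x n pa) hn

/-- The full assignments extending `v` are the points of `piFinset (M.fiberDom v)`. -/
def fiberDom (v : ν → ℕ) : ν → Finset ℕ :=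
  fun i => if i ∈ G.obs then {v i} else if i ∈ G.unobs then M.dom i else {0}

theorem fiberDom_of_mem_obs (v : ν → ℕ) {i : ν} (hi : i ∈ G.obs) : M.fiberDom v i = {v i} :=
  if_pos hi

theorem fiberDom_update {v : ν → ℕ} {m : ν} (hm : m ∈ G.obs) (n : ℕ) :
    M.fiberDom (Function.update v m n) = Function.update (M.fiberDom v) m {n} := by
  funext i
  rcases eq_or_ne i m with rfl | him
  · simp [fiberDom, hm]
  · simp [fiberDom, him]

theorem apply_eq_of_mem_piFinset_fiberDom {v w w' : ν → ℕ} (hw : w ∈ piFinset (M.fiberDom v))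
    (hw' : w' ∈ piFinset (M.fiberDom v)) {i : ν} (hi : i ∉ G.unobs) : w i = w' i := by
  have h := mem_piFinset.1 hw i
  have h' := mem_piFinset.1 hw' i
  by_cases hio : i ∈ G.obs <;> simp_all [fiberDom]

def weight (X W : Finset ν) (w : ν → ℕ) : ℝ :=
  (∏ x ∈ X, M.pO x (w x) w) * ∏ u ∈ W, M.pU u (w u)

theorem weight_nonneg (X W : Finset ν) (w : ν → ℕ) : 0 ≤ M.weight X W w :=
  mul_nonneg (prod_nonneg fun _ _ => M.pO_nonneg _ _ _) (prod_nonneg fun _ _ => M.pU_nonneg _ _)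

theorem weight_union {A B W₁ W₂ : Finset ν} (hAB : Disjoint A B) (hW : Disjoint W₁ W₂)
    (w : ν → ℕ) : M.weight (A ∪ B) (W₁ ∪ W₂) w = M.weight A W₁ w * M.weight B W₂ w := by
  simp only [weight, prod_union hAB, prod_union hW]
  ring

theorem weight_congr {X W : Finset ν} {w w' : ν → ℕ} (hX : ∀ x ∈ X, w x = w' x)
    (hpa : ∀ x ∈ X, ∀ p, G.E p x → w p = w' p) (hW : ∀ u ∈ W, w u = w' u) :
    M.weight X W w = M.weight X W w' := by
  unfold weight
  congr 1
  · exact prod_congr rfl fun x hx => by rw [hX x hx]; exact M.pO_par x _ w w' (hpa x hx)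
  · exact prod_congr rfl fun u hu => by rw [hW u hu]

theorem Q_eq_sum_fiberDom (S : Finset ν) {v : ν → ℕ} (hv : v ∈ M.obsAssign) :
    M.Q S v = ∑ w ∈ piFinset (M.fiberDom v), M.weight S G.unobs w := by
  refine sum_congr ?_ fun _ _ => rfl
  have hvdom := ((M.mem_obsAssign_iff).1 hv).1
  ext w
  simp only [fullAssign, verts, fiberDom, mem_filter, mem_piFinset, mem_union]
  constructor
  · rintro ⟨hw, hwv⟩ i
    by_cases hio : i ∈ G.obs
    · simp [hio, hwv i hio]
    · simpa [hio] using hw i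
  · intro hw
    refine ⟨fun i => ?_, fun x hx => by simpa [hx] using hw x⟩
    by_cases hio : i ∈ G.obs
    · have : w i = v i := by simpa [hio] using hw i
      simp [hio, this, hvdom i hio]
    · simpa [hio] using hw i

theorem Q_empty {v : ν → ℕ} (hv : v ∈ M.obsAssign) : M.Q ∅ v = 1 := by
  let c : ν → ℕ → ℝ := fun i n => if i ∈ G.unobs then M.pU i n else 1
  have hc : ∀ i, ∑ n ∈ M.fiberDom v i, c i n = 1 := by
    intro i
    by_cases hu : i ∈ G.unobs
    · have hio : i ∉ G.obs := fun hio => notMem_unobs_of_mem_obs hio hu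
      simp [c, fiberDom, hu, hio, M.pU_sum i hu]
    · by_cases hio : i ∈ G.obs <;> simp [c, fiberDom, hu, hio]
  rw [Q_eq_sum_fiberDom M ∅ hv]
  simp only [weight, prod_empty, one_mul]
  simp_rw [← Fintype.prod_ite_mem G.unobs]
  exact (prod_univ_sum (M.fiberDom v) c).symm.trans (prod_eq_one fun i _ => hc i)

theorem weight_piecewise_left {X W U : Finset ν} (hX : X ⊆ G.obs)
    (hpa : ∀ x ∈ X, ∀ p ∈ G.unobs, G.E p x → p ∈ U) (hW : W ⊆ U) {v w w' : ν → ℕ}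
    (hw : w ∈ piFinset (M.fiberDom v)) (hw' : w' ∈ piFinset (M.fiberDom v)) :
    M.weight X W (U.piecewise w w') = M.weight X W w := by
  have h : ∀ i, (i ∈ G.unobs → i ∈ U) → U.piecewise w w' i = w i := by
    intro i hi
    by_cases hiU : i ∈ U
    · exact piecewise_eq_of_mem _ _ _ hiU
    · rw [piecewise_eq_of_notMem _ _ _ hiU]
      exact M.apply_eq_of_mem_piFinset_fiberDom hw' hw (mt hi hiU)
  exact M.weight_congr (fun x hx => h x fun hxu => absurd hxu (notMem_unobs_of_mem_obs (hX hx)))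
    (fun x hx p hp => h p fun hpu => hpa x hx p hpu hp) (fun u hu => h u fun _ => hW hu)

theorem weight_piecewise_right {X W U : Finset ν} (hX : Disjoint X U)
    (hpa : ∀ x ∈ X, ∀ p ∈ U, ¬ G.E p x) (hW : Disjoint W U) (w w' : ν → ℕ) :
    M.weight X W (U.piecewise w w') = M.weight X W w' :=
  M.weight_congr (fun _ hx => piecewise_eq_of_notMem _ _ _ (disjoint_left.1 hX hx))
    (fun x hx p hp => piecewise_eq_of_notMem _ _ _ fun hpU => hpa x hx p hpU hp)
    (fun _ hu => piecewise_eq_of_notMem _ _ _ (disjoint_left.1 hW hu))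

theorem Q_union {A B : Finset ν} (hA : A ⊆ G.obs) (hB : B ⊆ G.obs) (hAB : Disjoint A B)
    (hconf : G.Unconfounded A B) {v : ν → ℕ} (hv : v ∈ M.obsAssign) :
    M.Q (A ∪ B) v = M.Q A v * M.Q B v := by
  set P := piFinset (M.fiberDom v)
  set UA := G.unobs.filter fun u => ∃ a ∈ A, G.E u a
  set UB := G.unobs \ UA
  have hU : G.unobs = UA ∪ UB := (union_sdiff_of_subset (filter_subset _ _)).symm
  have hUdisj : Disjoint UA UB := disjoint_sdiff
  have key : ∀ X ⊆ A, ∀ Y ⊆ B, #P * M.Q (X ∪ Y) v =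
      (∑ w ∈ P, M.weight X UA w) * ∑ w ∈ P, M.weight Y UB w := by
    intro X hX Y hY
    rw [Q_eq_sum_fiberDom M _ hv, hU]
    simp_rw [M.weight_union (hAB.mono hX hY) hUdisj]
    refine card_piFinset_mul_sum_mul _ UA _ _ (fun w hw w' hw' => M.weight_piecewise_left
      (hX.trans hA) (fun x hx p hp hpx => mem_filter.2 ⟨hp, x, hX hx, hpx⟩) subset_rfl hw hw')
      fun w _ w' _ => M.weight_piecewise_right ?_ ?_ disjoint_sdiff_self_left w w'
    · exact disjoint_left.2 fun y hy hyU =>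
        notMem_unobs_of_mem_obs (hB (hY hy)) (filter_subset _ _ hyU)
    · intro y hy p hpU hpy
      obtain ⟨hpu, a, ha, hpa⟩ := mem_filter.1 hpU
      exact hconf p hpu a ha y (hY hy) hpa hpy
  have hAB' := key A subset_rfl B subset_rfl
  have hA' := key A subset_rfl ∅ (empty_subset _)
  have hB' := key ∅ (empty_subset _) B subset_rfl
  have h1 := key ∅ (empty_subset _) ∅ (empty_subset _)
  simp only [union_empty, empty_union, M.Q_empty hv, mul_one] at hA' hB' h1
  have hP : (#P : ℝ) ≠ 0 := by
    refine Nat.cast_ne_zero.2 (card_ne_zero.2 (Fintype.piFinset_nonempty.2 fun i => ?_))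
    unfold fiberDom
    split_ifs
    exacts [singleton_nonempty _, M.dom_ne i, singleton_nonempty _]
  -- both `#P² Q[A ∪ B]` and `#P² Q[A] Q[B]` equal the product of the four sums
  refine mul_left_cancel₀ (mul_ne_zero hP hP) ?_
  linear_combination (#P : ℝ) * hAB' - #P * M.Q B v * hA' - (∑ w ∈ P, M.weight A UA w) *
    (∑ w ∈ P, M.weight ∅ UB w) * hB' +
    (∑ w ∈ P, M.weight A UA w) * (∑ w ∈ P, M.weight B UB w) * h1

theorem weight_update_sink {S W : Finset ν} {m : ν} (hm : m ∈ S) (hmW : m ∉ W)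
    (hsink : ∀ y ∈ S, ¬ G.E m y) (w : ν → ℕ) (n : ℕ) :
    M.weight S W (Function.update w m n) = M.pO m n w * M.weight (S.erase m) W w := by
  have hpa : ∀ x ∈ S, ∀ p, G.E p x → p ≠ m := fun x hx p hp h => hsink x hx (h ▸ hp)
  have hrest : M.weight (S.erase m) W (Function.update w m n) = M.weight (S.erase m) W w :=
    M.weight_congr (fun x hx => Function.update_of_ne (ne_of_mem_erase hx) _ _)
      (fun x hx p hp => Function.update_of_ne (hpa x (mem_of_mem_erase hx) p hp) _ _)
      (fun u hu => Function.update_of_ne (ne_of_mem_of_not_mem hu hmW) _ _)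
  rw [← hrest, weight, weight, ← mul_prod_erase S _ hm, Function.update_self, mul_assoc,
    M.pO_par m n _ w fun p hp => Function.update_of_ne (hpa m hm p hp) _ _]

theorem Q_erase_sink {S : Finset ν} (hS : S ⊆ G.obs) {m : ν} (hm : m ∈ S)
    (hsink : ∀ y ∈ S, ¬ G.E m y) {v : ν → ℕ} (hv : v ∈ M.obsAssign) :
    ∑ n ∈ M.dom m, M.Q S (Function.update v m n) = M.Q (S.erase m) v := by
  have hmo := hS hm
  calc ∑ n ∈ M.dom m, M.Q S (Function.update v m n)
      = ∑ n ∈ M.dom m, ∑ w ∈ piFinset (M.fiberDom v),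
          M.pO m n w * M.weight (S.erase m) G.unobs w := by
        refine sum_congr rfl fun n hn => ?_
        rw [Q_eq_sum_fiberDom M S (M.update_mem_obsAssign hv hmo hn), M.fiberDom_update hmo,
          sum_piFinset_update_singleton _ (M.fiberDom_of_mem_obs v hmo)]
        exact sum_congr rfl fun w _ =>
          M.weight_update_sink hm (notMem_unobs_of_mem_obs hmo) hsink w n
    _ = ∑ w ∈ piFinset (M.fiberDom v),
          (∑ n ∈ M.dom m, M.pO m n w) * M.weight (S.erase m) G.unobs w := by
        rw [sum_comm]
        simp_rw [sum_mul]
    _ = M.Q (S.erase m) v := by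
        simp_rw [M.pO_sum m hmo, one_mul]
        rw [Q_eq_sum_fiberDom M _ hv]

theorem P_le_Q {S : Finset ν} (hS : S ⊆ G.obs) {v : ν → ℕ} (hv : v ∈ M.obsAssign) :
    M.P v ≤ M.Q S v := by
  rw [P, Q_eq_sum_fiberDom M _ hv, Q_eq_sum_fiberDom M _ hv]
  refine sum_le_sum fun w hw => ?_
  have hsplit : M.weight G.obs G.unobs w =
      (∏ x ∈ G.obs \ S, M.pO x (w x) w) * M.weight S G.unobs w := by
    rw [weight, weight, ← prod_sdiff hS, mul_assoc]
  have hle : ∏ x ∈ G.obs \ S, M.pO x (w x) w ≤ 1 := by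
    refine prod_le_one (fun _ _ => M.pO_nonneg _ _ _) fun x hx => ?_
    have hxo := (mem_sdiff.1 hx).1
    have hwx : w x = v x := by simpa [M.fiberDom_of_mem_obs v hxo] using mem_piFinset.1 hw x
    exact M.pO_le_one hxo (hwx ▸ ((M.mem_obsAssign_iff).1 hv).1 x hxo) w
  rw [hsplit]
  exact mul_le_of_le_one_left (M.weight_nonneg _ _ _) hle

theorem Q_pos (hpos : M.positive) {S : Finset ν} (hS : S ⊆ G.obs) {v : ν → ℕ}
    (hv : v ∈ M.obsAssign) : 0 < M.Q S v :=
  (hpos v hv).trans_le (M.P_le_Q hS hv)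

theorem joinAssign_mem_obsAssign {T : Finset ν} {x y : ν → ℕ}
    (hx : ∀ i ∈ G.obs \ T, x i ∈ M.dom i) (hy : ∀ i ∈ T, y i ∈ M.dom i) :
    G.joinAssign T x y ∈ M.obsAssign := by
  refine (M.mem_obsAssign_iff).2 ⟨fun i hi => ?_, fun i hi => if_neg hi⟩
  by_cases hiT : i ∈ T
  · simpa [joinAssign, hi, hiT] using hy i hiT
  · simpa [joinAssign, hi, hiT] using hx i (mem_sdiff.2 ⟨hi, hiT⟩)

theorem joinAssign_self {T : Finset ν} {v : ν → ℕ} (hv : v ∈ M.obsAssign) :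
    G.joinAssign T v v = v := by
  funext i
  by_cases hi : i ∈ G.obs
  · simp [joinAssign, hi]
  · simp [joinAssign, hi, ((M.mem_obsAssign_iff).1 hv).2 i hi]

theorem Px_eq_Q {T : Finset ν} (hT : T ⊆ G.obs) {x y : ν → ℕ}
    (h : G.joinAssign T x y ∈ M.obsAssign) :
    M.Px (G.obs \ T) x T y = M.Q T (G.joinAssign T x y) := by
  have hfilter : M.obsAssign.filter (fun v => (∀ i ∈ G.obs \ T, v i = x i) ∧ ∀ i ∈ T, v i = y i)
      = {G.joinAssign T x y} := by
    ext v
    simp only [mem_filter, mem_singleton, mem_sdiff]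
    constructor
    · rintro ⟨hv, hvx, hvy⟩
      funext i
      simp only [joinAssign]
      split_ifs with hi hiT
      exacts [hvy i hiT, hvx i ⟨hi, hiT⟩, ((M.mem_obsAssign_iff).1 hv).2 i hi]
    · rintro rfl
      exact ⟨h, fun i hi => by simp [joinAssign, hi.1, hi.2],
        fun i hi => by simp [joinAssign, hT hi, hi]⟩
  rw [Px, hfilter, sum_singleton, Finset.sdiff_sdiff_eq_self hT]

theorem Q_biUnion {𝒯 : Finset (Finset ν)} (hobs : ∀ T ∈ 𝒯, T ⊆ G.obs)
    (hpair : ∀ T ∈ 𝒯, ∀ T' ∈ 𝒯, T ≠ T' → Disjoint T T' ∧ G.Unconfounded T T')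
    {v : ν → ℕ} (hv : v ∈ M.obsAssign) : M.Q (𝒯.biUnion id) v = ∏ T ∈ 𝒯, M.Q T v := by
  induction 𝒯 using Finset.induction_on with
  | empty => simpa using M.Q_empty hv
  | insert T 𝒯 hT ih =>
    have hpair' : ∀ T' ∈ 𝒯, Disjoint T T' ∧ G.Unconfounded T T' := fun T' hT' =>
      hpair T (mem_insert_self _ _) T' (mem_insert_of_mem hT') (ne_of_mem_of_not_mem hT' hT).symm
    have hsub : 𝒯.biUnion id ⊆ G.obs :=
      biUnion_subset.2 fun T' hT' => hobs T' (mem_insert_of_mem hT')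
    have hdisj : Disjoint T (𝒯.biUnion id) :=
      (disjoint_biUnion_right _ _ _).2 fun T' hT' => (hpair' T' hT').1
    have hconf : G.Unconfounded T (𝒯.biUnion id) := fun u hu a ha b hb => by
      obtain ⟨T', hT', hbT'⟩ := mem_biUnion.1 hb
      exact (hpair' T' hT').2 u hu a ha b hbT'
    rw [biUnion_insert, prod_insert hT, id, M.Q_union (hobs T (mem_insert_self _ _)) hsub hdisj
      hconf hv, ih (fun T' hT' => hobs T' (mem_insert_of_mem hT'))
        (fun T₁ h₁ T₂ h₂ => hpair T₁ (mem_insert_of_mem h₁) T₂ (mem_insert_of_mem h₂))]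

theorem Q_eq_prod_cComponents {S : Finset ν} (hS : S ⊆ G.obs) {v : ν → ℕ}
    (hv : v ∈ M.obsAssign) : M.Q S v = ∏ T ∈ G.cComponents S, M.Q T v := by
  conv_lhs => rw [← G.biUnion_cComponents S]
  exact M.Q_biUnion (fun T hT => (subset_of_mem_cComponents hT).trans hS)
    (fun T hT T' hT' hne => ⟨disjoint_of_mem_cComponents hT hT' hne,
      unconfounded_of_mem_cComponents hT hT' hne⟩) hv

end SEM

def QAgree (M₁ M₂ : SEM G) (S : Finset ν) : Prop :=
  ∀ v ∈ M₁.obsAssign, M₁.Q S v = M₂.Q S v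

variable {M₁ M₂ : SEM G}

theorem QAgree.erase_sink (hdom : ∀ i ∈ G.obs, M₁.dom i = M₂.dom i) {S : Finset ν}
    (hS : S ⊆ G.obs) {m : ν} (hm : m ∈ S) (hsink : ∀ y ∈ S, ¬ G.E m y)
    (h : QAgree M₁ M₂ S) : QAgree M₁ M₂ (S.erase m) := by
  intro v hv
  have hmdom := hdom m (hS hm)
  rw [← M₁.Q_erase_sink hS hm hsink hv,
    ← M₂.Q_erase_sink hS hm hsink (SEM.obsAssign_congr hdom ▸ hv)]
  exact sum_congr hmdom fun n hn =>
    h _ (M₁.update_mem_obsAssign hv (hS hm) (hmdom ▸ hn))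

/-- Recursion on `#(A ∪ B)`, removing a sink `m`; when `m ∈ A` the roles of `A` and `B` are
swapped and `Q[A]` is recovered as `Q[A ∪ B] / Q[B]`. -/
theorem QAgree.of_union (h₁ : M₁.positive) (hdom : ∀ i ∈ G.obs, M₁.dom i = M₂.dom i)
    {A B : Finset ν} (hA : A ⊆ G.obs) (hB : B ⊆ G.obs) (hAB : Disjoint A B)
    (hconf : G.Unconfounded A B) (h : QAgree M₁ M₂ (A ∪ B)) : QAgree M₁ M₂ A := by
  obtain hS | hS := (A ∪ B).eq_empty_or_nonempty
  · obtain ⟨rfl, rfl⟩ := union_eq_empty.1 hS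
    rwa [union_empty] at h
  obtain ⟨m, hm, hsink⟩ := exists_sink hS
  have h' := h.erase_sink hdom (union_subset hA hB) hm hsink
  rcases mem_union.1 hm with hmA | hmB
  · have hmB : m ∉ B := disjoint_left.1 hAB hmA
    have herase : B ∪ A.erase m = (A ∪ B).erase m := by
      rw [erase_union_distrib, erase_eq_of_notMem hmB, union_comm]
    have hlt : #(B ∪ A.erase m) < #(A ∪ B) := herase ▸ card_erase_lt_of_mem hm
    have hBagree : QAgree M₁ M₂ B :=
      (herase ▸ h').of_union h₁ hdom hB ((erase_subset _ _).trans hA)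
        (hAB.symm.mono_right (erase_subset _ _)) (hconf.symm.mono_right (erase_subset _ _))
    intro v hv
    have hQ := h v hv
    rw [M₁.Q_union hA hB hAB hconf hv,
      M₂.Q_union hA hB hAB hconf (SEM.obsAssign_congr hdom ▸ hv), ← hBagree v hv] at hQ
    exact mul_right_cancel₀ (M₁.Q_pos h₁ hB hv).ne' hQ
  · have hmA : m ∉ A := disjoint_right.1 hAB hmB
    have herase : A ∪ B.erase m = (A ∪ B).erase m := by
      rw [erase_union_distrib, erase_eq_of_notMem hmA]
    have hlt : #(A ∪ B.erase m) < #(A ∪ B) := herase ▸ card_erase_lt_of_mem hm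
    exact (herase ▸ h').of_union h₁ hdom hA ((erase_subset _ _).trans hB)
      (hAB.mono_right (erase_subset _ _)) (hconf.mono_right (erase_subset _ _))
termination_by #(A ∪ B)

theorem QAgree.of_mem_cComponents (h₁ : M₁.positive)
    (hdom : ∀ i ∈ G.obs, M₁.dom i = M₂.dom i) {S T : Finset ν} (hS : S ⊆ G.obs)
    (hT : T ∈ G.cComponents S) (h : QAgree M₁ M₂ S) : QAgree M₁ M₂ T := by
  have hTS := subset_of_mem_cComponents hT
  rw [← union_sdiff_of_subset hTS] at h
  exact h.of_union h₁ hdom (hTS.trans hS) (sdiff_subset.trans hS) disjoint_sdiff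
    (unconfounded_sdiff_of_mem_cComponents hT)

theorem QAgree.of_forall_cComponents (hdom : ∀ i ∈ G.obs, M₁.dom i = M₂.dom i)
    {S : Finset ν} (hS : S ⊆ G.obs) (h : ∀ T ∈ G.cComponents S, QAgree M₁ M₂ T) :
    QAgree M₁ M₂ S := fun v hv => by
  rw [M₁.Q_eq_prod_cComponents hS hv,
    M₂.Q_eq_prod_cComponents hS (SEM.obsAssign_congr hdom ▸ hv)]
  exact prod_congr rfl fun T hT => h T hT v hv

theorem qIdentifiable_iff {T : Finset ν} (hT : T ⊆ G.obs) :
    G.QIdentifiable T ↔ ∀ M₁ M₂ : SEM G, M₁.positive → M₂.positive →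
      (∀ i ∈ G.obs, M₁.dom i = M₂.dom i) → (∀ v ∈ M₁.obsAssign, M₁.P v = M₂.P v) →
      QAgree M₁ M₂ T := by
  refine forall₄_congr fun M₁ M₂ _ _ => forall₂_congr fun hdom _ => ⟨fun h v hv => ?_, ?_⟩
  · have hdomv : ∀ i ∈ G.obs, v i ∈ M₁.dom i := ((M₁.mem_obsAssign_iff).1 hv).1
    have hv₂ : v ∈ M₂.obsAssign := SEM.obsAssign_congr hdom ▸ hv
    have := h v v (fun i hi => hdomv i (mem_sdiff.1 hi).1) (fun i hi => hdomv i (hT hi))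
    rwa [M₁.Px_eq_Q hT (by rwa [M₁.joinAssign_self hv]),
      M₂.Px_eq_Q hT (by rwa [M₂.joinAssign_self hv₂]), M₁.joinAssign_self hv] at this
  · intro h x y hx hy
    have hmem := M₁.joinAssign_mem_obsAssign hx hy
    rw [M₁.Px_eq_Q hT hmem, M₂.Px_eq_Q hT (SEM.obsAssign_congr hdom ▸ hmem)]
    exact h _ hmem

end CausalGraph

open CausalGraph in
/-- Proposition 2, Tian–Pearl. `Q[S]` is identifiable from `G` iff
`Q[Sᵢ]` is identifiable from `G` for every c-component `Sᵢ` of `S`. -/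
theorem id_iff_id_all_ccomponents
    {ν : Type} [Fintype ν] [DecidableEq ν] (G : CausalGraph ν)
    (S : Finset ν) (hS : S ⊆ G.obs) :
    G.QIdentifiable S ↔ ∀ T ∈ G.cComponents S, G.QIdentifiable T := by
  have hTobs : ∀ T ∈ G.cComponents S, T ⊆ G.obs :=
    fun T hT => (subset_of_mem_cComponents hT).trans hS
  rw [qIdentifiable_iff hS]
  constructor
  · intro h T hT
    rw [qIdentifiable_iff (hTobs T hT)]
    exact fun M₁ M₂ h₁ h₂ hdom hP => (h M₁ M₂ h₁ h₂ hdom hP).of_mem_cComponents h₁ hdom hS hT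
  · intro h M₁ M₂ h₁ h₂ hdom hP
    exact QAgree.of_forall_cComponents hdom hS fun T hT =>
      (qIdentifiable_iff (hTobs T hT)).1 (h T hT) M₁ M₂ h₁ h₂ hdom hP
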